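/- arXiv:1707.05541 — 7 statements merged into one kernel-verified Lean document; each statement's English description precedes it below -/
import Mathlib

section
/- A permutation π of {0,1,…,n−1} belongs to C_n if and only if for every triple of distinct indices (i,j,k), the triple (π(i), π(j), π(k)) is cyclically co-oriented with (i,j,k). -/
/-- Two ordered triples of elements of a linear order have the same relative
order pattern. -/
def SameOrder {α : Type*} [LinearOrder α] (i j k a b c : α) : Prop :=
  (i < j ↔ a < b) ∧ (j < k ↔ b < c) ∧ (i < k ↔ a < c)

/-- The triple `(a, b, c)` is cyclically co-oriented with `(i, j, k)`:
some cyclic rotation of `(a, b, c)` has the same relative order as `(i, j, k)`. -/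
def CyclicallyCoOriented {α : Type*} [LinearOrder α] (i j k a b c : α) : Prop :=
  SameOrder i j k a b c ∨ SameOrder i j k b c a ∨ SameOrder i j k c a b

/-- `π` belongs to `C_n`: there is `k` such that `π i = i + k (mod n)` for all `i`. -/
def IsCyclicShift {n : ℕ} (π : Equiv.Perm (Fin n)) : Prop :=
  ∃ k : Fin n, ∀ i, π i = i + k

/-!
Read `{0, …, n - 1}` as `n` points on a circle. For a triple with distinct entries, being
cyclically co-oriented with its image says that `π` preserves the strict cyclic order `sbtw`
of `Fin n`, which rotations do. Conversely, if `π` preserves `sbtw`, so does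
`σ x = π x - π 0`; since `σ` fixes the least element `0`, preserving the cyclic order forces
`σ` to be monotone, and the only monotone permutation of `Fin n` is the identity.
-/

section LinearOrder

-- the circular order that Mathlib also puts on `Fin n`
attribute [local instance] LinearOrder.toCircularOrder

variable {α : Type*} [LinearOrder α]

theorem cyclicallyCoOriented_iff_sbtw_iff {i j k a b c : α} (hik : i ≠ k) (hab : a ≠ b)
    (hbc : b ≠ c) (hac : a ≠ c) :
    CyclicallyCoOriented i j k a b c ↔ (sbtw i j k ↔ sbtw a b c) := by
  simp only [CyclicallyCoOriented, SameOrder, sbtw_iff]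
  grind

theorem strictMono_of_map_sbtw {β : Type*} [LinearOrder β] {f : α → β} {a₀ : α}
    (ha₀ : IsBot a₀) (hfa₀ : IsBot (f a₀)) (hf : Function.Injective f)
    (hsbtw : ∀ a b c, sbtw a b c → sbtw (f a) (f b) (f c)) : StrictMono f := by
  intro a b hab
  obtain rfl | ha := eq_or_ne a a₀
  · exact (hfa₀ _).lt_of_ne (hf.ne hab.ne)
  · rcases hsbtw a₀ a b (.inl ⟨(ha₀ a).lt_of_ne ha.symm, hab⟩) with h | h | h
    · exact h.2
    · exact absurd (hfa₀ _) h.2.not_ge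
    · exact absurd (hfa₀ _) h.1.not_ge

end LinearOrder

theorem Fin.sbtw_add_right_iff {n : ℕ} {a b c : Fin n} (k : Fin n) :
    sbtw (a + k) (b + k) (c + k) ↔ sbtw a b c := by
  have := a.isLt; have := b.isLt; have := c.isLt; have := k.isLt
  simp only [Fin.sbtw_iff, Fin.lt_def, Fin.val_add_eq_ite]
  split_ifs <;> omega

theorem IsCyclicShift.sbtw_apply_iff {n : ℕ} {π : Equiv.Perm (Fin n)} (hπ : IsCyclicShift π)
    (a b c : Fin n) : sbtw (π a) (π b) (π c) ↔ sbtw a b c := by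
  obtain ⟨k, hk⟩ := hπ
  simp only [hk, Fin.sbtw_add_right_iff]

theorem isCyclicShift_of_map_sbtw {n : ℕ} [NeZero n] {π : Equiv.Perm (Fin n)}
    (hπ : ∀ a b c, sbtw a b c → sbtw (π a) (π b) (π c)) : IsCyclicShift π := by
  have hmono : StrictMono fun x ↦ π x - π 0 := by
    refine strictMono_of_map_sbtw (a₀ := 0) Fin.zero_le (by rw [sub_self]; exact Fin.zero_le)
      (sub_left_injective.comp π.injective) fun a b c habc ↦ ?_
    simpa only [sub_eq_add_neg, Fin.sbtw_add_right_iff] using hπ a b c habc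
  exact ⟨π 0, fun i ↦ sub_eq_iff_eq_add.mp hmono.apply_eq⟩

theorem cyclicShift_iff_coOriented {n : ℕ} (hn : 0 < n) (π : Equiv.Perm (Fin n)) :
    IsCyclicShift π ↔
      ∀ i j k : Fin n, i ≠ j → j ≠ k → i ≠ k →
        CyclicallyCoOriented i j k (π i) (π j) (π k) := by
  have : NeZero n := ⟨hn.ne'⟩
  have hcoOriented (i j k : Fin n) (hij : i ≠ j) (hjk : j ≠ k) (hik : i ≠ k) :
      CyclicallyCoOriented i j k (π i) (π j) (π k) ↔ (sbtw i j k ↔ sbtw (π i) (π j) (π k)) :=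
    cyclicallyCoOriented_iff_sbtw_iff hik (π.injective.ne hij) (π.injective.ne hjk)
      (π.injective.ne hik)
  constructor
  · intro hπ i j k hij hjk hik
    exact (hcoOriented i j k hij hjk hik).mpr (hπ.sbtw_apply_iff i j k).symm
  · intro h
    refine isCyclicShift_of_map_sbtw fun a b c habc ↦ ?_
    have hab : a ≠ b := by rintro rfl; exact sbtw_irrefl_left habc
    have hbc : b ≠ c := by rintro rfl; exact sbtw_irrefl_right habc
    have hac : a ≠ c := by rintro rfl; exact sbtw_irrefl_left_right habc
    exact (hcoOriented a b c hab hbc hac).mp (h a b c hab hbc hac) |>.mp habc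
end

section
/- Let c : [0,1] → ℝ be a C-function and let x₁ < y₁ < y₂ < x₂ be points of [0,1] (the nested configuration). Then c(y₂−x₁) + c(x₂−y₁) ≤ c(y₁−x₁) + c(x₂−y₂); that is, the crossing matching pairing x₁ with y₂ and x₂ with y₁ has cost no larger than the nested matching pairing x₁ with y₁ and x₂ with y₂. -/
/-- `f` is a `𝒞`-function on `[0,1]`. -/
def IsCFunction (f : ℝ → ℝ) : Prop :=
  ∀ ⦃z₁ z₂ : ℝ⦄, 0 < z₁ → z₁ < z₂ → z₂ < 1 →
    (∀ η : ℝ, 0 < η → η < 1 - z₂ → f z₂ - f z₁ ≤ f (η + z₂) - f (η + z₁)) ∧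
    (∀ η : ℝ, z₂ < η → η < 1 → f z₂ - f z₁ ≤ f (η - z₂) - f (η - z₁))

/-!
If `x₂ - x₁ < 1`, the inequality is property (ii) at `z₁ = y₁ - x₁`, `z₂ = y₂ - x₁`,
`η = x₂ - x₁`. In the boundary case `x₁ = 0`, `x₂ = 1` no admissible `η` is left. There, combining
(i) and (ii) around a small increment `[w, w + δ]` near `0` with (ii) at `η = 1 - δ` bounds
every such increment of `c` by half the defect `c y₁ + c (1 - y₂) - c y₂ - c (1 - y₁)`;
telescoping `n` equal increments over a fixed interval `[u, v]`, half the defect is at least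
`(c v - c u) / n` for every `n`, hence nonnegative.
-/

lemma nonneg_of_forall_sub_le {f : ℝ → ℝ} {a b K : ℝ} (hab : a < b)
    (h : ∀ w δ, a < w → 0 < δ → w + δ < b → f (w + δ) - f w ≤ K) : 0 ≤ K := by
  set L := (b - a) / 3
  have hL : 0 < L := by positivity
  have hb : b = a + 3 * L := by ring
  have hbound : ∀ n : ℕ, 0 < n → (f (a + 2 * L) - f (a + L)) / n ≤ K := by
    intro n hn
    have hn' : (0 : ℝ) < n := by exact_mod_cast hn
    set δ := L / n
    have hδ : 0 < δ := by positivity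
    have hnδ : (n : ℝ) * δ = L := mul_div_cancel₀ L hn'.ne'
    have hstep : ∀ k ∈ Finset.range n, f (a + L + (k + 1 : ℕ) * δ) - f (a + L + k * δ) ≤ K := by
      intro k hk
      have hk' : (k : ℝ) + 1 ≤ n := by exact_mod_cast Finset.mem_range.mp hk
      have := h (a + L + k * δ) δ (by nlinarith) hδ (by nlinarith)
      simpa [add_mul, add_assoc] using this
    have htele := Finset.sum_le_card_nsmul _ _ _ hstep
    rw [Finset.sum_range_sub (fun k : ℕ => f (a + L + k * δ)), Finset.card_range, nsmul_eq_mul,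
      hnδ] at htele
    simp only [Nat.cast_zero, zero_mul, add_zero] at htele
    rw [div_le_iff₀ hn', two_mul, ← add_assoc]
    linarith
  exact le_of_tendsto (tendsto_const_div_atTop_nhds_zero_nat _)
    (Filter.eventually_atTop.mpr ⟨1, fun n hn => hbound n hn⟩)

namespace IsCFunction

variable {c : ℝ → ℝ}

theorem two_mul_sub_le (hc : IsCFunction c) {y₁ y₂ w δ : ℝ} (h₁ : 0 < y₁) (h₂ : y₁ < y₂)
    (h₃ : y₂ < 1) (hw : 0 < w) (hδ : 0 < δ) (hwy : w + δ < y₁) (hwy' : w + δ < 1 - y₂) :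
    2 * (c (w + δ) - c w) ≤ c y₁ + c (1 - y₂) - c y₂ - c (1 - y₁) := by
  have hy := (hc h₁ h₂ h₃).2 (1 - δ) (by linarith) (by linarith)
  obtain ⟨hshift, hreflect⟩ := hc hw (lt_add_of_pos_right w hδ) (by linarith)
  have hs := hshift (1 - y₂ - δ - w) (by linarith) (by linarith)
  have hr := hreflect (1 - y₁ + w) (by linarith) (by linarith)
  rw [show 1 - y₂ - δ - w + (w + δ) = 1 - y₂ by ring,
    show 1 - y₂ - δ - w + w = 1 - δ - y₂ by ring] at hs
  rw [show 1 - y₁ + w - (w + δ) = 1 - δ - y₁ by ring, show 1 - y₁ + w - w = 1 - y₁ by ring] at hr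
  linarith

theorem crossing_le_nested_of_zero_one (hc : IsCFunction c) {y₁ y₂ : ℝ} (h₁ : 0 < y₁) (h₂ : y₁ < y₂)
    (h₃ : y₂ < 1) : c y₂ + c (1 - y₁) ≤ c y₁ + c (1 - y₂) := by
  have := nonneg_of_forall_sub_le (f := c) (lt_min h₁ (sub_pos.mpr h₃)) fun w δ hw hδ hwδ =>
    (le_div_iff₀' two_pos).mpr <| hc.two_mul_sub_le h₁ h₂ h₃ hw hδ
      (hwδ.trans_le (min_le_left _ _)) (hwδ.trans_le (min_le_right _ _))
  linarith

theorem crossing_le_nested_of_sub_lt_one (hc : IsCFunction c) {x₁ x₂ y₁ y₂ : ℝ} (h₁ : x₁ < y₁)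
    (h₂ : y₁ < y₂) (h₃ : y₂ < x₂) (hx : x₂ - x₁ < 1) :
    c (y₂ - x₁) + c (x₂ - y₁) ≤ c (y₁ - x₁) + c (x₂ - y₂) := by
  have h := (hc (sub_pos.mpr h₁) (sub_lt_sub_right h₂ x₁) (by linarith)).2 (x₂ - x₁)
    (sub_lt_sub_right h₃ x₁) hx
  rw [sub_sub_sub_cancel_right, sub_sub_sub_cancel_right] at h
  linarith

end IsCFunction

/-- In the nested configuration `x₁ < y₁ < y₂ < x₂`, the crossing matching is
optimal for a `𝒞`-function cost. -/
theorem cFunction_nested_crossing_optimal (c : ℝ → ℝ) (hc : IsCFunction c)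
    (x₁ x₂ y₁ y₂ : ℝ) (hx₁ : 0 ≤ x₁) (h₁ : x₁ < y₁) (h₂ : y₁ < y₂)
    (h₃ : y₂ < x₂) (hx₂ : x₂ ≤ 1) :
    c (y₂ - x₁) + c (x₂ - y₁) ≤ c (y₁ - x₁) + c (x₂ - y₂) := by
  rcases (show x₂ - x₁ ≤ 1 by linarith).lt_or_eq with hlt | heq
  · exact hc.crossing_le_nested_of_sub_lt_one h₁ h₂ h₃ hlt
  · obtain rfl : x₁ = 0 := by linarith
    obtain rfl : x₂ = 1 := by linarith
    simpa only [sub_zero] using hc.crossing_le_nested_of_zero_one h₁ h₂ h₃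
end

section
/- Let c : [0,1] → ℝ be a strictly convex, strictly increasing function, and let 0 ≤ x₁ < x₂ < … < x_N ≤ 1 and 0 ≤ y₁ < y₂ < … < y_N ≤ 1. Then for every permutation π of {1,…,N}, Σᵢ c(|xᵢ − yᵢ|) ≤ Σᵢ c(|xᵢ − y_{π(i)}|); that is, the identity permutation is an optimal matching. -/
/-!
Since `c` is convex and nondecreasing on `[0,1]`, `h = c ∘ |·|` is convex on `[-1,1]`. Hence the
cost array `h (x i - y j)` is a Monge array: for `i < i'` and `j < j'` the two arguments
`x i - y j` and `x i' - y j'` lie between `x i - y j'` and `x i' - y j` and have the same sum, so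
convexity gives the exchange inequality. For a Monge array, moving the largest index that is not
fixed into place by one transposition never increases the cost, so the identity is optimal.
-/

open Finset Equiv Set

theorem ConvexOn.map_add_map_sub_le_of_mem_Icc {D : Set ℝ} {f : ℝ → ℝ} (hf : ConvexOn ℝ D f)
    {a b u : ℝ} (ha : a ∈ D) (hb : b ∈ D) (hu : u ∈ Icc a b) :
    f u + f (a + b - u) ≤ f a + f b := by
  obtain ⟨hau, hub⟩ := hu
  rcases hau.eq_or_lt with rfl | hau
  · simp
  have hab : 0 < b - a := by linarith
  set θ := (u - a) / (b - a)
  have hθ₀ : 0 ≤ θ := div_nonneg (by linarith) hab.le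
  have hθ₁ : 0 ≤ 1 - θ := by
    rw [sub_nonneg, div_le_one hab]; linarith
  have hu_eq : (1 - θ) • a + θ • b = u := by
    simp only [smul_eq_mul, θ]; field_simp; ring
  have hv_eq : θ • a + (1 - θ) • b = a + b - u := by
    simp only [smul_eq_mul, θ]; field_simp; ring
  have h₁ := hf.2 ha hb hθ₁ hθ₀ (by ring)
  have h₂ := hf.2 ha hb hθ₀ hθ₁ (by ring)
  rw [hu_eq] at h₁
  rw [hv_eq] at h₂
  simp only [smul_eq_mul] at h₁ h₂
  linarith

theorem ConvexOn.map_sub_add_map_sub_le {D : Set ℝ} {h : ℝ → ℝ} (hh : ConvexOn ℝ D h)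
    {a b s t : ℝ} (hab : a ≤ b) (hst : s ≤ t) (hat : a - t ∈ D) (hbs : b - s ∈ D) :
    h (a - s) + h (b - t) ≤ h (a - t) + h (b - s) := by
  have := hh.map_add_map_sub_le_of_mem_Icc hat hbs (u := a - s) ⟨by linarith, by linarith⟩
  rwa [show a - t + (b - s) - (a - s) = b - t by ring] at this

def IsMonge {ι α : Type*} [Preorder ι] [Add α] [LE α] (F : ι → ι → α) : Prop :=
  ∀ ⦃i i' j j'⦄, i < i' → j < j' → F i j + F i' j' ≤ F i j' + F i' j

theorem ConvexOn.isMonge_comp_sub {ι : Type*} [Preorder ι] {D : Set ℝ} {h : ℝ → ℝ}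
    (hh : ConvexOn ℝ D h) {x y : ι → ℝ} (hx : Monotone x) (hy : Monotone y)
    (hxy : ∀ i j, x i - y j ∈ D) : IsMonge fun i j => h (x i - y j) :=
  fun i i' j j' hi hj => hh.map_sub_add_map_sub_le (hx hi.le) (hy hj.le) (hxy i j') (hxy i' j)

theorem ConvexOn.comp_abs {c : ℝ → ℝ} {r : ℝ} (hc : ConvexOn ℝ (Icc 0 r) c)
    (hm : MonotoneOn c (Icc 0 r)) : ConvexOn ℝ (Icc (-r) r) (c ∘ abs) := by
  have himage : abs '' Icc (-r) r = Icc 0 r := by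
    ext v
    constructor
    · rintro ⟨w, hw, rfl⟩
      exact ⟨abs_nonneg w, abs_le.2 hw⟩
    · rintro ⟨hv₀, hv₁⟩
      exact ⟨v, ⟨by linarith, hv₁⟩, abs_of_nonneg hv₀⟩
  rw [← himage] at hc hm
  exact hc.comp (convexOn_norm (convex_Icc _ _)) hm

namespace Equiv.Perm

variable {ι α : Type*}

theorem sum_comp_mul_swap_add [Fintype ι] [DecidableEq ι] [AddCommMonoid α] (F : ι → ι → α)
    (σ : Perm ι) {i j : ι} (hij : i ≠ j) :
    ∑ k, F k ((σ * swap i j) k) + (F i (σ i) + F j (σ j)) =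
      ∑ k, F k (σ k) + (F i (σ j) + F j (σ i)) := by
  have hrest : ∑ k ∈ {i, j}ᶜ, F k ((σ * swap i j) k) = ∑ k ∈ {i, j}ᶜ, F k (σ k) := by
    refine sum_congr rfl fun k hk => ?_
    simp only [Finset.mem_compl, Finset.mem_insert, Finset.mem_singleton, not_or] at hk
    rw [mul_apply, swap_apply_of_ne_of_ne hk.1 hk.2]
  rw [← sum_compl_add_sum {i, j}, ← sum_compl_add_sum {i, j} (fun k => F k (σ k)), hrest,
    sum_pair hij, sum_pair hij, mul_apply, mul_apply, swap_apply_left, swap_apply_right]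
  abel

theorem sum_diag_le_sum_of_isMonge [LinearOrder ι] [Fintype ι] [AddCommMonoid α]
    [PartialOrder α] [IsOrderedCancelAddMonoid α] {F : ι → ι → α} (hF : IsMonge F) (σ : Perm ι) :
    ∑ i, F i i ≤ ∑ i, F i (σ i) := by
  suffices ∀ s : Finset ι, ∀ σ : Perm ι, (∀ x, σ x ≠ x → x ∈ s) → ∑ i, F i i ≤ ∑ i, F i (σ i) from
    this univ σ fun x _ => mem_univ x
  intro s
  induction s using Finset.induction_on_max with
  | empty =>
    intro σ hσ
    have : σ = 1 := Equiv.ext fun x => by_contra fun hx => by simpa using hσ x hx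
    simp [this]
  | insert a s hlt ih =>
    intro σ hσ
    by_cases hfix : σ a = a
    · exact ih σ fun x hx => mem_of_mem_insert_of_ne (hσ x hx) (by rintro rfl; exact hx hfix)
    set b := σ.symm a
    have hσb : σ b = a := σ.apply_symm_apply a
    have hba : b ≠ a := by rintro h; rw [h] at hσb; exact hfix hσb
    set τ := σ * swap b a
    have hτa : τ a = a := by simp [τ, mul_apply, hσb]
    have hτb : τ b = σ a := by simp [τ, mul_apply]
    have hτ : ∀ x, τ x ≠ x → x ∈ s := by
      intro x hx
      have hxa : x ≠ a := by rintro rfl; exact hx hτa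
      refine mem_of_mem_insert_of_ne (hσ x fun hσx => hx ?_) hxa
      have hxb : x ≠ b := by rintro rfl; exact hxa (hσb.symm.trans hσx).symm
      rw [mul_apply, swap_apply_of_ne_of_ne hxb hxa, hσx]
    have hb_lt : b < a := hlt b (mem_of_mem_insert_of_ne (hσ b (hσb ▸ hba.symm)) hba)
    have hσa_lt : σ a < a := hlt _ (mem_of_mem_insert_of_ne
      (hσ _ fun h => hfix (σ.injective h)) hfix)
    have hswap := sum_comp_mul_swap_add F τ hba
    rw [mul_swap_mul_self, hτa, hτb] at hswap
    refine (ih τ hτ).trans (le_of_add_le_add_right (a := F b a + F a (σ a)) ?_)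
    rw [← hswap]
    exact add_le_add le_rfl (hF hb_lt hσa_lt)

end Equiv.Perm

/-- For a strictly convex, strictly increasing cost on `[0,1]`, the identity
permutation (matching the points in increasing order) is optimal. -/
theorem strictConvex_increasing_identity_optimal {N : ℕ} (c : ℝ → ℝ)
    (hconv : StrictConvexOn ℝ (Set.Icc (0:ℝ) 1) c)
    (hmono : StrictMonoOn c (Set.Icc (0:ℝ) 1))
    (x y : Fin N → ℝ) (hx : StrictMono x) (hy : StrictMono y)
    (hx01 : ∀ i, x i ∈ Set.Icc (0:ℝ) 1) (hy01 : ∀ i, y i ∈ Set.Icc (0:ℝ) 1)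
    (π : Equiv.Perm (Fin N)) :
    ∑ i, c |x i - y i| ≤ ∑ i, c |x i - y (π i)| := by
  have hcost : ConvexOn ℝ (Icc (-1) 1) (c ∘ abs) := hconv.convexOn.comp_abs hmono.monotoneOn
  have hdiff : ∀ i j, x i - y j ∈ Icc (-1 : ℝ) 1 := fun i j =>
    ⟨by linarith [(hx01 i).1, (hy01 j).2], by linarith [(hx01 i).2, (hy01 j).1]⟩
  exact Perm.sum_diag_le_sum_of_isMonge (hcost.isMonge_comp_sub hx.monotone hy.monotone hdiff) π
end

section
/- Consider the assignment problem on [0,1] with cost function c(z) = z^p, and let 0 ≤ x₁ < … < x_N ≤ 1 and 0 ≤ y₁ < … < y_N ≤ 1 (with xᵢ ≠ y_j for all i,j when p < 0). If p > 1, then the identity permutation minimizes Σᵢ |xᵢ − y_{π(i)}|^p over all permutations π of {1,…,N}. If p < 0, then the minimum of Σᵢ |xᵢ − y_{π(i)}|^p over all permutations is attained by some permutation in C_N. -/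
open Finset Equiv

namespace Equiv.Perm

theorem sum_mul_swap_sub_sum {α M : Type*} [Fintype α] [DecidableEq α] [AddCommGroup M]
    (g : α → α → M) (σ : Perm α) {i j : α} (hij : i ≠ j) :
    ∑ k, g k ((σ * swap i j) k) - ∑ k, g k (σ k) =
      g i (σ j) + g j (σ i) - (g i (σ i) + g j (σ j)) := by
  rw [← sum_sub_distrib, Fintype.sum_eq_add i j hij fun k hk => by
    simp [swap_apply_of_ne_of_ne hk.1 hk.2]]
  simp only [mul_apply, swap_apply_left, swap_apply_right]
  abel

variable {n : ℕ}

theorem apply_one_le_of_swap_le {β : Type*} [Preorder β] (f : Perm (Fin n) → β)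
    (hf : ∀ σ : Perm (Fin n), ∀ i j, i < j → σ j < σ i → f (σ * swap i j) ≤ f σ)
    (τ : Perm (Fin n)) : f 1 ≤ f τ := by
  classical
  let g : Fin n → Fin n → ℤ := fun k l => (k : ℤ) * (l : ℤ)
  obtain ⟨σ, hστ, hmax⟩ := exists_max_image {σ | f σ ≤ f τ} (fun σ => ∑ k, g k (σ k))
    ⟨τ, by simp⟩
  rw [mem_filter] at hστ
  suffices hmono : StrictMono σ by
    obtain rfl : σ = 1 := ext fun i => hmono.apply_eq
    exact hστ.2
  refine fun i j hij => lt_of_not_ge fun hji => ?_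
  have hji : σ j < σ i := hji.lt_of_ne (σ.injective.ne hij.ne')
  have hgain : g i (σ i) + g j (σ j) < g i (σ j) + g j (σ i) := by
    have : (i : ℤ) < j := by exact_mod_cast hij
    have : (σ j : ℤ) < σ i := by exact_mod_cast hji
    simp only [g]
    nlinarith
  have hle := hmax (σ * swap i j) (by simpa using (hf σ i j hij hji).trans hστ.2)
  linarith [sum_mul_swap_sub_sum g σ hij.ne]

theorem eq_of_inversion_iff {σ τ : Perm (Fin n)}
    (h : ∀ i j, i < j → (σ j < σ i ↔ τ j < τ i)) : σ = τ := by
  suffices hmono : StrictMono (σ * τ⁻¹) by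
    simpa using congrArg (· * τ) (show σ * τ⁻¹ = 1 from ext fun i => hmono.apply_eq)
  intro a b hab
  obtain ⟨i, rfl⟩ := τ.surjective a
  obtain ⟨j, rfl⟩ := τ.surjective b
  simp only [mul_apply, coe_inv, symm_apply_apply]
  rcases lt_trichotomy i j with hij | rfl | hji
  · exact lt_of_le_of_ne (not_lt.1 fun h' => (h i j hij).1 h' |>.not_gt hab)
      (σ.injective.ne hij.ne)
  · exact absurd hab (lt_irrefl _)
  · exact (h j i hji).2 hab

end Equiv.Perm

theorem Fin.sub_lt_sub_right_iff {n : ℕ} (a : Fin n) {i j : Fin n} (hij : i < j) :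
    j - a < i - a ↔ i < a ∧ a ≤ j := by
  have hsub : ∀ k : Fin n, ((k - a : Fin n) : ℕ) = if a ≤ k then (k : ℕ) - a else n + k - a :=
    fun k => by
      split_ifs with h
      · exact Fin.coe_sub_iff_le.2 h
      · exact Fin.coe_sub_iff_lt.2 (not_le.1 h)
  rw [Fin.lt_def, hsub, hsub]
  simp only [Fin.le_def, Fin.lt_def] at hij ⊢
  have := i.isLt
  have := j.isLt
  split_ifs <;> omega

theorem isCyclicShift_of_inversion_iff {n : ℕ} [NeZero n] {σ : Perm (Fin n)} {s : Set (Fin n)}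
    (hs : IsLowerSet s) (h : ∀ i j, i < j → (σ j < σ i ↔ i ∈ s ∧ j ∉ s)) : IsCyclicShift σ := by
  rcases hs.eq_univ_or_Iio with rfl | ⟨a, rfl⟩
  · obtain rfl : σ = 1 := Perm.eq_of_inversion_iff fun i j hij => by
      simpa [hij.not_gt] using h i j hij
    exact ⟨0, fun i => by simp⟩
  · obtain rfl : σ = Equiv.subRight a := Perm.eq_of_inversion_iff fun i j hij => by
      simpa [Fin.sub_lt_sub_right_iff a hij] using h i j hij
    exact ⟨-a, fun i => sub_eq_add_neg i a⟩

section ConvexQuadrilateral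

variable {𝕜 : Type*} [Field 𝕜] [LinearOrder 𝕜] [IsStrictOrderedRing 𝕜] {s : Set 𝕜} {f : 𝕜 → 𝕜}
  {m M u v : 𝕜}

theorem ConvexOn.map_add_map_le (hf : ConvexOn 𝕜 s f) (hm : m ∈ s) (hM : M ∈ s) (hu : m ≤ u)
    (hv : m ≤ v) (h : u + v = m + M) : f u + f v ≤ f m + f M := by
  rcases hu.eq_or_lt with rfl | hu
  · rw [show v = M by linarith]
  rcases hv.eq_or_lt with rfl | hv
  · rw [show u = M by linarith, add_comm]
  have hMm : 0 < M - m := by linarith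
  have eu := hf.secant_mono_aux1 hm hM hu (by linarith)
  have ev := hf.secant_mono_aux1 hm hM hv (by linarith)
  refine le_of_mul_le_mul_left ?_ hMm
  linear_combination eu + ev + (f M - f m) * h

theorem StrictConvexOn.map_add_map_lt (hf : StrictConvexOn 𝕜 s f) (hm : m ∈ s) (hM : M ∈ s)
    (hu : m < u) (hv : m < v) (h : u + v = m + M) : f u + f v < f m + f M := by
  have hMm : 0 < M - m := by linarith
  have eu := hf.secant_strict_mono_aux1 hm hM hu (by linarith)
  have ev := hf.secant_strict_mono_aux1 hm hM hv (by linarith)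
  refine lt_of_mul_lt_mul_left ?_ hMm.le
  linear_combination eu + ev + (f M - f m) * h

end ConvexQuadrilateral

theorem convexOn_abs_rpow {p : ℝ} (hp : 1 ≤ p) : ConvexOn ℝ Set.univ fun t : ℝ => |t| ^ p := by
  have himage : (fun t : ℝ => |t|) '' Set.univ = Set.Ici 0 := by
    ext t
    exact ⟨by rintro ⟨s, -, rfl⟩; exact abs_nonneg s, fun ht => ⟨t, trivial, abs_of_nonneg ht⟩⟩
  refine ConvexOn.comp (g := fun t : ℝ => t ^ p) ?_ ?_ ?_
  · rw [himage]; exact convexOn_rpow hp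
  · exact convexOn_univ_norm
  · rw [himage]; exact Real.monotoneOn_rpow_Ici_of_exponent_nonneg (by linarith)

theorem strictConvexOn_rpow_of_neg {p : ℝ} (hp : p < 0) :
    StrictConvexOn ℝ (Set.Ioi 0) fun t : ℝ => t ^ p := by
  refine strictConvexOn_of_deriv2_pos' (convex_Ioi 0)
    (fun t ht => (Real.continuousAt_rpow_const t p (.inl (ne_of_gt ht))).continuousWithinAt)
    fun t ht => ?_
  rw [Real.iter_deriv_rpow_const]
  have : (descPochhammer ℝ 2).eval p = p * (p - 1) := by simp [descPochhammer_succ_right]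
  rw [this]
  exact mul_pos (mul_pos_of_neg_of_neg hp (by linarith)) (Real.rpow_pos_of_pos ht _)

section Assignment

variable {n : ℕ} {x y : Fin n → ℝ}

theorem sum_le_sum_comp_perm_of_convexOn {f : ℝ → ℝ} (hf : ConvexOn ℝ Set.univ f)
    (hx : Monotone x) (hy : Monotone y) (τ : Perm (Fin n)) :
    ∑ i, f (x i - y i) ≤ ∑ i, f (x i - y (τ i)) := by
  refine Perm.apply_one_le_of_swap_le (fun σ => ∑ i, f (x i - y (σ i)))
    (fun σ i j hij hji => ?_) τ
  have hswap := Perm.sum_mul_swap_sub_sum (fun k l => f (x k - y l)) σ hij.ne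
  have huncross := hf.map_add_map_le trivial trivial (m := x i - y (σ i)) (M := x j - y (σ j))
    (u := x i - y (σ j)) (v := x j - y (σ i)) (by linarith [hy hji.le]) (by linarith [hx hij.le])
    (by ring)
  linarith

variable {g : ℝ → ℝ} {a b u v : ℝ}

theorem lt_of_lt_of_swap_cost_le (hanti : StrictAntiOn g (Set.Ioi 0)) (hab : a < b) (hau : a ≠ u)
    (hbv : b < v) (hopt : g |a - u| + g |b - v| ≤ g |a - v| + g |b - u|) : a < u := by
  by_contra! hua
  have hua : u < a := hua.lt_of_ne' hau
  rw [abs_of_pos (by linarith : 0 < a - u), abs_of_neg (by linarith : b - v < 0),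
    abs_of_neg (by linarith : a - v < 0), abs_of_pos (by linarith : 0 < b - u), neg_sub,
    neg_sub] at hopt
  have h1 := hanti (Set.mem_Ioi.2 (by linarith : 0 < v - b))
    (Set.mem_Ioi.2 (by linarith : 0 < v - a)) (by linarith)
  have h2 := hanti (Set.mem_Ioi.2 (by linarith : 0 < a - u))
    (Set.mem_Ioi.2 (by linarith : 0 < b - u)) (by linarith)
  linarith

theorem lt_iff_of_swap_cost_le (hanti : StrictAntiOn g (Set.Ioi 0))
    (hconv : StrictConvexOn ℝ (Set.Ioi 0) g) (hab : a < b) (hau : a ≠ u) (hbv : b ≠ v)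
    (huv : u ≠ v) (hopt : g |a - u| + g |b - v| ≤ g |a - v| + g |b - u|) :
    v < u ↔ a < u ∧ ¬ b < v := by
  constructor
  · intro hvu
    have hau' : a < u := by
      by_contra! hua
      have hua : u < a := hua.lt_of_ne' hau
      rw [abs_of_pos (by linarith : 0 < a - u), abs_of_pos (by linarith : 0 < b - v),
        abs_of_pos (by linarith : 0 < a - v), abs_of_pos (by linarith : 0 < b - u)] at hopt
      have := hconv.map_add_map_lt (Set.mem_Ioi.2 (by linarith : 0 < a - u))
        (Set.mem_Ioi.2 (by linarith : 0 < b - v)) (by linarith : a - u < a - v)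
        (by linarith : a - u < b - u) (by ring)
      linarith
    refine ⟨hau', fun hbv' => ?_⟩
    rw [abs_of_neg (by linarith : a - u < 0), abs_of_neg (by linarith : b - v < 0),
      abs_of_neg (by linarith : a - v < 0), abs_of_neg (by linarith : b - u < 0), neg_sub,
      neg_sub, neg_sub, neg_sub] at hopt
    have := hconv.map_add_map_lt (Set.mem_Ioi.2 (by linarith : 0 < v - b))
      (Set.mem_Ioi.2 (by linarith : 0 < u - a)) (by linarith : v - b < v - a)
      (by linarith : v - b < u - b) (by ring)
    linarith
  · rintro ⟨hau', hbv'⟩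
    by_contra! hvu
    have hvb : v < b := (not_lt.1 hbv').lt_of_ne hbv.symm
    have huv : u < v := hvu.lt_of_ne huv
    rw [abs_of_neg (by linarith : a - u < 0), abs_of_pos (by linarith : 0 < b - v),
      abs_of_neg (by linarith : a - v < 0), abs_of_pos (by linarith : 0 < b - u), neg_sub,
      neg_sub] at hopt
    have h1 := hanti (Set.mem_Ioi.2 (by linarith : 0 < u - a))
      (Set.mem_Ioi.2 (by linarith : 0 < v - a)) (by linarith)
    have h2 := hanti (Set.mem_Ioi.2 (by linarith : 0 < b - v))
      (Set.mem_Ioi.2 (by linarith : 0 < b - u)) (by linarith)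
    linarith

theorem exists_isCyclicShift_forall_sum_le [NeZero n] (hanti : StrictAntiOn g (Set.Ioi 0))
    (hconv : StrictConvexOn ℝ (Set.Ioi 0) g) (hx : StrictMono x) (hy : StrictMono y)
    (hxy : ∀ i j, x i ≠ y j) :
    ∃ π : Perm (Fin n), IsCyclicShift π ∧
      ∀ σ : Perm (Fin n), ∑ i, g |x i - y (π i)| ≤ ∑ i, g |x i - y (σ i)| := by
  obtain ⟨π, -, hπ⟩ :=
    exists_min_image univ (fun σ : Perm (Fin n) => ∑ i, g |x i - y (σ i)|) univ_nonempty
  refine ⟨π, ?_, fun σ => hπ σ (mem_univ σ)⟩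
  have hopt : ∀ i j, i ≠ j → g |x i - y (π i)| + g |x j - y (π j)| ≤
      g |x i - y (π j)| + g |x j - y (π i)| := fun i j hij => by
    linarith [hπ (π * swap i j) (mem_univ _),
      Perm.sum_mul_swap_sub_sum (fun k l => g |x k - y l|) π hij]
  refine isCyclicShift_of_inversion_iff (s := {i | x i < y (π i)}) ?_ fun i j hij => ?_
  · intro j i hij hj
    rcases hij.eq_or_lt with rfl | hij
    · exact hj
    · exact lt_of_lt_of_swap_cost_le hanti (hx hij) (hxy i _) hj (hopt i j hij.ne)
  · rw [← hy.lt_iff_lt]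
    exact lt_iff_of_swap_cost_le hanti hconv (hx hij) (hxy i _) (hxy j _)
      (hy.injective.ne (π.injective.ne hij.ne)) (hopt i j hij.ne)

end Assignment

theorem power_cost_optimal_structure_general {N : ℕ} (hN : 0 < N) (p : ℝ)
    (x y : Fin N → ℝ) (hx : StrictMono x) (hy : StrictMono y) :
    (1 < p → ∀ π : Equiv.Perm (Fin N),
        ∑ i, |x i - y i| ^ p ≤ ∑ i, |x i - y (π i)| ^ p) ∧
    (p < 0 → (∀ i j, x i ≠ y j) →
      ∃ π : Equiv.Perm (Fin N), IsCyclicShift π ∧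
        ∀ σ : Equiv.Perm (Fin N),
          ∑ i, |x i - y (π i)| ^ p ≤ ∑ i, |x i - y (σ i)| ^ p) := by
  have : NeZero N := ⟨hN.ne'⟩
  refine ⟨fun hp π => ?_, fun hp hxy => ?_⟩
  · exact sum_le_sum_comp_perm_of_convexOn (convexOn_abs_rpow hp.le) hx.monotone hy.monotone π
  · exact exists_isCyclicShift_forall_sum_le (Real.strictAntiOn_rpow_Ioi_of_exponent_neg hp)
      (strictConvexOn_rpow_of_neg hp) hx hy hxy

/-- For the power-law cost `c(z) = z^p` on `[0,1]`: if `p > 1` the identity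
permutation is optimal, and if `p < 0` (with no coinciding points) the optimum
is attained by a cyclic permutation. -/
theorem power_cost_optimal_structure {N : ℕ} (hN : 0 < N) (p : ℝ)
    (x y : Fin N → ℝ) (hx : StrictMono x) (hy : StrictMono y)
    (hx01 : ∀ i, x i ∈ Set.Icc (0:ℝ) 1) (hy01 : ∀ i, y i ∈ Set.Icc (0:ℝ) 1) :
    (1 < p → ∀ π : Equiv.Perm (Fin N),
        ∑ i, |x i - y i| ^ p ≤ ∑ i, |x i - y (π i)| ^ p) ∧
    (p < 0 → (∀ i j, x i ≠ y j) →
      ∃ π : Equiv.Perm (Fin N), IsCyclicShift π ∧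
        ∀ σ : Equiv.Perm (Fin N),
          ∑ i, |x i - y (π i)| ^ p ≤ ∑ i, |x i - y (σ i)| ^ p) :=
  power_cost_optimal_structure_general hN p x y hx hy
end

section
/- For p < 0, the function ĉ : [0,1] → ℝ defined by ĉ(z) = z^p for 0 < z ≤ 1/2 and ĉ(z) = (1−z)^p for 1/2 < z < 1 (the periodized power cost, equal to the p-th power of the distance on the unit circumference) is a C-function. -/
open Set Real

lemma convexOn_rpow_of_nonpos {p : ℝ} (hp : p ≤ 0) :
    ConvexOn ℝ (Ioi 0) fun x : ℝ => x ^ p := by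
  refine convexOn_of_hasDerivWithinAt2_nonneg (convex_Ioi 0)
    (fun x hx => (continuousAt_rpow_const _ _ (Or.inl (mem_Ioi.1 hx).ne')).continuousWithinAt)
    (f' := fun x => p * x ^ (p - 1)) (f'' := fun x => p * ((p - 1) * x ^ (p - 1 - 1)))
    (fun x hx => ?_) (fun x hx => ?_) (fun x hx => ?_) <;> rw [interior_Ioi] at hx
  · exact (hasDerivAt_rpow_const (Or.inl hx.ne')).hasDerivWithinAt
  · exact ((hasDerivAt_rpow_const (Or.inl hx.ne')).const_mul p).hasDerivWithinAt
  · exact mul_nonneg_of_nonpos_of_nonpos hp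
      (mul_nonpos_of_nonpos_of_nonneg (by linarith) (rpow_nonneg hx.le _))

lemma ConvexOn.comp_one_sub {s : Set ℝ} {f : ℝ → ℝ} (hf : ConvexOn ℝ s f) :
    ConvexOn ℝ ((fun x => 1 - x) ⁻¹' s) fun x => f (1 - x) :=
  hf.comp_affineMap (AffineMap.const ℝ ℝ (1 : ℝ) - AffineMap.id ℝ ℝ)

lemma ConvexOn.sub_le_sub_add_right {s : Set ℝ} {f : ℝ → ℝ} (hf : ConvexOn ℝ s f)
    {x y t : ℝ} (hx : x ∈ s) (hyt : y + t ∈ s) (hxy : x < y) (ht : 0 < t) :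
    f y - f x ≤ f (y + t) - f (x + t) := by
  have hIcc : Icc x (y + t) ⊆ s := hf.1.ordConnected.out hx hyt
  have hy : y ∈ s := hIcc ⟨hxy.le, by linarith⟩
  have hxt : x + t ∈ s := hIcc ⟨by linarith, by linarith⟩
  have hleft : (f y - f x) / (y - x) ≤ (f (y + t) - f x) / (y + t - x) :=
    hf.secant_mono hx hy hyt hxy.ne' (by linarith) (by linarith)
  have hright : (f x - f (y + t)) / (x - (y + t)) ≤ (f (x + t) - f (y + t)) / (x + t - (y + t)) :=
    hf.secant_mono hyt hx hxt (by linarith) (by linarith) (by linarith)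
  rw [← neg_div_neg_eq, neg_sub, neg_sub] at hright
  rw [← neg_div_neg_eq (f (x + t) - _), neg_sub, neg_sub, show y + t - (x + t) = y - x by ring]
    at hright
  exact (div_le_div_iff_of_pos_right (sub_pos.2 hxy)).1 (hleft.trans hright)

theorem isCFunction_of_convexOn_of_symm {f : ℝ → ℝ} (hf : ConvexOn ℝ (Ioo 0 1) f)
    (hsymm : ∀ x ∈ Ioo (0 : ℝ) 1, f (1 - x) = f x) : IsCFunction f := by
  intro z₁ z₂ hz₁ h₁₂ hz₂
  refine ⟨fun η hη hη₂ => ?_, fun η hη hη₁ => ?_⟩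
  · rw [add_comm η, add_comm η]
    exact hf.sub_le_sub_add_right ⟨hz₁, by linarith⟩ ⟨by linarith, by linarith⟩ h₁₂ hη
  · have hreflect : ∀ z ∈ Ioo 0 η, f (η - z) = f (z + (1 - η)) := fun z hz => by
      rw [← hsymm (z + (1 - η)) ⟨by linarith [hz.1], by linarith [hz.2]⟩]
      ring_nf
    rw [hreflect z₁ ⟨hz₁, by linarith⟩, hreflect z₂ ⟨by linarith, hη⟩]
    exact hf.sub_le_sub_add_right ⟨hz₁, by linarith⟩ ⟨by linarith, by linarith⟩ h₁₂
      (by linarith)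

noncomputable def periodizedRpow (p z : ℝ) : ℝ := if z ≤ 1 / 2 then z ^ p else (1 - z) ^ p

lemma periodizedRpow_one_sub (p z : ℝ) : periodizedRpow p (1 - z) = periodizedRpow p z := by
  unfold periodizedRpow
  split_ifs with h₁ h₂ h₂
  · rw [show z = 1 / 2 by linarith]
    norm_num
  · rfl
  · rw [sub_sub_cancel]
  · exact (h₁ (by linarith)).elim

lemma periodizedRpow_eqOn_max {p : ℝ} (hp : p ≤ 0) :
    EqOn (periodizedRpow p) (fun z => max (z ^ p) ((1 - z) ^ p)) (Ioo 0 1) := by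
  intro z ⟨hz₀, hz₁⟩
  unfold periodizedRpow
  split_ifs with h
  · exact (max_eq_left (rpow_le_rpow_of_nonpos hz₀ (by linarith) hp)).symm
  · exact (max_eq_right (rpow_le_rpow_of_nonpos (by linarith) (by linarith) hp)).symm

lemma convexOn_periodizedRpow {p : ℝ} (hp : p ≤ 0) :
    ConvexOn ℝ (Ioo 0 1) (periodizedRpow p) := by
  have hpow : ConvexOn ℝ (Ioo 0 1) fun z : ℝ => z ^ p :=
    (convexOn_rpow_of_nonpos hp).subset Ioo_subset_Ioi_self (convex_Ioo 0 1)
  have hreflected : ConvexOn ℝ (Ioo 0 1) fun z : ℝ => (1 - z) ^ p :=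
    (convexOn_rpow_of_nonpos hp).comp_one_sub.subset (fun z hz => sub_pos.2 hz.2) (convex_Ioo 0 1)
  exact (hpow.sup hreflected).congr (periodizedRpow_eqOn_max hp).symm

/-- For `p < 0`, the periodized power cost (the `p`-th power of the distance on
the unit circumference) is a `𝒞`-function. -/
theorem periodized_power_cost_isCFunction (p : ℝ) (hp : p < 0) :
    IsCFunction (fun z : ℝ => if z ≤ 1 / 2 then z ^ p else (1 - z) ^ p) :=
  isCFunction_of_convexOn_of_symm (convexOn_periodizedRpow hp.le)
    fun z _ => periodizedRpow_one_sub p z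
end

section
/- Let p > 1 and let 0 ≤ x₁ < x₂ < … < x_{2N} ≤ 1. Then for every perfect matching μ of {1,…,2N} (a partition into N unordered pairs), Σ_{i=1}^{N} (x_{2i} − x_{2i−1})^p ≤ Σ_{(i,j)∈μ} |xᵢ − x_j|^p; that is, the matching pairing consecutive points (x₁ with x₂, x₃ with x₄, …) is optimal for the matching problem on the interval with cost z^p. -/
/-!
The gap `[x_{2t}, x_{2t+1}]` has an odd number `2t + 1` of points to its left, so at least one
pair of any perfect matching, and hence (counting each pair twice) at least two terms of
`∑ i, |x i - x (π i)| ^ p`, straddle it. Since `z ↦ z ^ p` is superadditive for `p ≥ 1`,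
the cost of a pair dominates the sum of the `p`-th powers of the consecutive gaps it straddles;
summing over the pairs gives the claim.
-/

open Finset

lemma Real.sum_rpow_le_rpow_sum {ι : Type*} {p : ℝ} (hp : 1 ≤ p) (s : Finset ι) {f : ι → ℝ}
    (hf : ∀ i ∈ s, 0 ≤ f i) : ∑ i ∈ s, f i ^ p ≤ (∑ i ∈ s, f i) ^ p := by
  classical
  induction s using Finset.induction_on with
  | empty => simp [Real.zero_rpow (by linarith : p ≠ 0)]
  | insert a s ha ih =>
    have hs : ∀ i ∈ s, 0 ≤ f i := fun i hi => hf i (mem_insert_of_mem hi)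
    rw [sum_insert ha, sum_insert ha]
    calc f a ^ p + ∑ i ∈ s, f i ^ p ≤ f a ^ p + (∑ i ∈ s, f i) ^ p := by gcongr; exact ih hs
      _ ≤ (f a + ∑ i ∈ s, f i) ^ p :=
        Real.add_rpow_le_rpow_add (hf a (mem_insert_self a s)) (sum_nonneg hs) hp

lemma Finset.even_card_of_involutive {α : Type*} {σ : α → α} (hσ : Function.Involutive σ)
    (hfree : ∀ a, σ a ≠ a) {s : Finset α} (hs : ∀ a ∈ s, σ a ∈ s) : Even #s := by
  rw [← ZMod.natCast_eq_zero_iff_even, card_eq_sum_ones, Nat.cast_sum, Nat.cast_one]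
  exact sum_involution (fun a _ => σ a) (fun _ _ => by decide) (fun a _ _ => hfree a) hs
    (fun a _ => hσ a)

lemma Fin.exists_le_lt_apply_of_involutive {n : ℕ} {σ : Fin n → Fin n}
    (hσ : Function.Involutive σ) (hfree : ∀ i, σ i ≠ i) {k : Fin n} (hk : Even (k : ℕ)) :
    ∃ i, i ≤ k ∧ k < σ i := by
  by_contra! h
  have heven := even_card_of_involutive hσ hfree (s := Iic k)
    fun i hi => mem_Iic.2 (h i (mem_Iic.1 hi))
  rw [Fin.card_Iic] at heven
  exact Nat.not_even_iff_odd.2 hk.add_one heven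

lemma Monotone.abs_sub_eq {α : Type*} [LinearOrder α] {y : α → ℝ} (hy : Monotone y) (a b : α) :
    |y a - y b| = y (max a b) - y (min a b) := by
  rcases le_total a b with h | h
  · rw [abs_sub_comm, abs_of_nonneg (sub_nonneg.2 (hy h)), max_eq_right h, min_eq_left h]
  · rw [abs_of_nonneg (sub_nonneg.2 (hy h)), max_eq_left h, min_eq_right h]

lemma Monotone.sum_sub_le {y : ℕ → ℝ} (hy : Monotone y) {a b : ℕ} (hab : a ≤ b)
    {K : Finset ℕ} (hK : K ⊆ Ico a b) : ∑ k ∈ K, (y (k + 1) - y k) ≤ y b - y a :=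
  calc ∑ k ∈ K, (y (k + 1) - y k) ≤ ∑ k ∈ Ico a b, (y (k + 1) - y k) :=
        sum_le_sum_of_subset_of_nonneg hK fun k _ _ => sub_nonneg.2 (hy k.le_succ)
    _ = y b - y a := sum_Ico_sub y hab

lemma Monotone.sum_sub_rpow_le {y : ℕ → ℝ} (hy : Monotone y) {p : ℝ} (hp : 1 ≤ p) {a b : ℕ}
    (hab : a ≤ b) {ι : Type*} (S : Finset ι) {k : ι → ℕ} (hk : Set.InjOn k S)
    (hS : ∀ t ∈ S, a ≤ k t ∧ k t < b) :
    ∑ t ∈ S, (y (k t + 1) - y (k t)) ^ p ≤ (y b - y a) ^ p := by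
  classical
  have hgap : ∀ t ∈ S, 0 ≤ y (k t + 1) - y (k t) := fun t _ => sub_nonneg.2 (hy (k t).le_succ)
  have htele : ∑ t ∈ S, (y (k t + 1) - y (k t)) ≤ y b - y a := by
    rw [← sum_image (f := fun j => y (j + 1) - y j) hk]
    exact hy.sum_sub_le hab (image_subset_iff.2 fun t ht => mem_Ico.2 (hS t ht))
  calc ∑ t ∈ S, (y (k t + 1) - y (k t)) ^ p ≤ (∑ t ∈ S, (y (k t + 1) - y (k t))) ^ p :=
        Real.sum_rpow_le_rpow_sum hp S hgap
    _ ≤ (y b - y a) ^ p := Real.rpow_le_rpow (sum_nonneg hgap) htele (by linarith)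

lemma mul_sum_le_sum_of_le_card_covering {ι κ : Type*} [Fintype ι] [Fintype κ]
    (covers : ι → κ → Prop) [∀ i t, Decidable (covers i t)] {w : κ → ℝ} (hw : ∀ t, 0 ≤ w t)
    {c : ι → ℝ} (hc : ∀ i, ∑ t with covers i t, w t ≤ c i) {m : ℕ}
    (hm : ∀ t, m ≤ #{i | covers i t}) :
    m * ∑ t, w t ≤ ∑ i, c i :=
  calc (m : ℝ) * ∑ t, w t ≤ ∑ t, (#{i | covers i t} : ℝ) * w t := by
        rw [mul_sum]; gcongr with t
        exacts [hw t, by exact_mod_cast hm t]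
    _ = ∑ i, ∑ t with covers i t, w t := by
        simp only [← nsmul_eq_mul, ← sum_const, sum_filter]
        exact sum_comm
    _ ≤ ∑ i, c i := sum_le_sum fun i _ => hc i

theorem Monotone.two_mul_sum_consecutive_rpow_le {N : ℕ} {y : ℕ → ℝ} (hy : Monotone y) {p : ℝ}
    (hp : 1 ≤ p) {π : Fin (2 * N) → Fin (2 * N)} (hinv : Function.Involutive π)
    (hfree : ∀ i, π i ≠ i) :
    2 * ∑ t : Fin N, (y (2 * t + 1) - y (2 * t)) ^ p ≤ ∑ i : Fin (2 * N), |y i - y (π i)| ^ p := by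
  classical
  let straddles (i : Fin (2 * N)) (t : Fin N) : Prop :=
    min (i : ℕ) (π i) ≤ 2 * t ∧ 2 * (t : ℕ) < max (i : ℕ) (π i)
  have hcost (i : Fin (2 * N)) :
      ∑ t with straddles i t, (y (2 * t + 1) - y (2 * t)) ^ p ≤ |y i - y (π i)| ^ p := by
    rw [hy.abs_sub_eq]
    exact hy.sum_sub_rpow_le hp min_le_max _ (fun s _ t _ h => Fin.ext (by simpa using h))
      fun t ht => (mem_filter.1 ht).2
  have hcount (t : Fin N) : 2 ≤ #{i | straddles i t} := by
    obtain ⟨i, hle, hlt⟩ := Fin.exists_le_lt_apply_of_involutive hinv hfree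
      (k := ⟨2 * t, by omega⟩) (even_two_mul _)
    simp only [Fin.le_def, Fin.lt_def] at hle hlt
    refine (card_pair (hfree i).symm).ge.trans (card_le_card fun j hj => ?_)
    rcases mem_insert.1 hj with rfl | hj
    · simp only [mem_filter_univ, straddles]; omega
    · simp only [mem_singleton.1 hj, mem_filter_univ, straddles, hinv i]; omega
  exact_mod_cast mul_sum_le_sum_of_le_card_covering straddles
    (fun t => Real.rpow_nonneg (sub_nonneg.2 (hy (2 * (t : ℕ)).le_succ)) p) hcost hcount

/-- For `p > 1` and `2N` increasingly ordered points on `[0,1]`, the matching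
pairing consecutive points is optimal: a perfect matching is encoded as a
fixed-point-free involution `π`, each pair being counted twice in the sum. -/
theorem matching_consecutive_pairs_optimal {N : ℕ} (p : ℝ) (hp : 1 < p)
    (x : Fin (2 * N) → ℝ) (hx : StrictMono x)
    (π : Equiv.Perm (Fin (2 * N)))
    (hinv : ∀ i, π (π i) = i) (hfree : ∀ i, π i ≠ i) :
    ∑ i : Fin N, (x ⟨2 * i.1 + 1, by omega⟩ - x ⟨2 * i.1, by omega⟩) ^ p ≤
      (1 / 2) * ∑ i, |x i - x (π i)| ^ p := by
  rcases N.eq_zero_or_pos with rfl | hN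
  · simp
  set y : ℕ → ℝ := fun k => x ⟨min k (2 * N - 1), by omega⟩
  have hy : Monotone y := fun k l hkl => hx.monotone (Fin.le_def.2 (by dsimp only; omega))
  have hyx : ∀ k (hk : k < 2 * N), y k = x ⟨k, hk⟩ :=
    fun k hk => congrArg x (Fin.ext (by dsimp only; omega))
  have hgaps := hy.two_mul_sum_consecutive_rpow_le hp.le (π := π) hinv hfree
  simp only [fun i : Fin (2 * N) => hyx i i.2, Fin.eta] at hgaps
  calc ∑ i : Fin N, (x ⟨2 * i.1 + 1, by omega⟩ - x ⟨2 * i.1, by omega⟩) ^ p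
      = ∑ t : Fin N, (y (2 * t + 1) - y (2 * t)) ^ p :=
        sum_congr rfl fun t _ => by rw [hyx _ (by omega), hyx _ (by omega)]
    _ ≤ (1 / 2) * ∑ i, |x i - x (π i)| ^ p := by linarith
end

section
/- Let X₁,…,X_{2N} be independent uniform random variables on [0,1] with order statistics X₍₁₎ ≤ … ≤ X₍₂N₎, and for 1 ≤ l ≤ N set φ_l = X₍l+N₎ − X₍l₎. Then for all 1 ≤ l ≤ k ≤ N, E[ φ_l φ_k ] = ( N(N+1) − (k−l) ) / ( (2N+2)(2N+1) ). -/
open MeasureTheory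

/-- The uniform probability measure on `[0,1]`. -/
noncomputable def unif : Measure ℝ := volume.restrict (Set.Icc 0 1)

/-- The law of `n` independent uniform points on `[0,1]`. -/
noncomputable def unifPi (n : ℕ) : Measure (Fin n → ℝ) :=
  Measure.pi fun _ => unif

/-- The increasing rearrangement (order statistics) of a tuple. -/
noncomputable def sortedTuple {n : ℕ} (ω : Fin n → ℝ) (i : Fin n) : ℝ :=
  ω (Tuple.sort ω i)

/-!
For `n` i.i.d. uniform points, exchangeability and the a.s. absence of ties give
`E[F(X₍₁₎, …, X₍ₙ₎)] = n! ∫_{x₁ ≤ ⋯ ≤ xₙ} F`. Monomials integrate over the ordered simplex in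
closed form by integrating out the largest coordinate first, which yields
`E[X₍a₎ X₍b₎] = (a + 1)(b + 2) / ((n + 1)(n + 2))` for `a ≤ b` (indices counted from `0`).
Expanding `φ_l φ_k` into four such products gives the formula.
-/

instance : IsProbabilityMeasure unif :=
  ⟨by rw [unif, Measure.restrict_apply_univ, Real.volume_Icc]; norm_num⟩

instance (n : ℕ) : IsProbabilityMeasure (unifPi n) := by
  rw [unifPi]; infer_instance

lemma unifPi_eq_restrict (n : ℕ) :
    unifPi n = volume.restrict (Set.univ.pi fun _ : Fin n => Set.Icc (0 : ℝ) 1) :=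
  (Measure.restrict_pi_pi _ _).symm

lemma ae_mem_Icc_unifPi (n : ℕ) : ∀ᵐ ω ∂unifPi n, ∀ i, ω i ∈ Set.Icc (0 : ℝ) 1 := by
  rw [unifPi_eq_restrict]
  filter_upwards [ae_restrict_mem (MeasurableSet.univ_pi fun _ => measurableSet_Icc)]
    with ω hω i using hω i trivial

lemma ae_injective_volume (n : ℕ) : ∀ᵐ ω : Fin n → ℝ, Function.Injective ω := by
  have hdiag : ∀ i j : Fin n, i ≠ j → ∀ᵐ ω : Fin n → ℝ, ω i ≠ ω j := by
    intro i j hij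
    let D : (Fin n → ℝ) →ₗ[ℝ] ℝ :=
      LinearMap.proj (R := ℝ) (φ := fun _ => ℝ) i - LinearMap.proj j
    have hD : LinearMap.ker D ≠ ⊤ := fun h => by
      have := LinearMap.mem_ker.1 (h ▸ Submodule.mem_top : Pi.single i 1 ∈ LinearMap.ker D)
      simp [D, hij.symm] at this
    refine measure_mono_null (fun ω hω => ?_) (Measure.addHaar_submodule volume _ hD)
    simpa [D, sub_eq_zero] using hω
  have hpair : ∀ i j : Fin n, ∀ᵐ ω : Fin n → ℝ, ω i = ω j → i = j := by
    intro i j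
    rcases eq_or_ne i j with rfl | hij
    · exact ae_of_all _ fun _ _ => rfl
    · exact (hdiag i j hij).mono fun ω hne heq => absurd heq hne
  filter_upwards [ae_all_iff.2 fun i => ae_all_iff.2 (hpair i)] with ω hω i j using hω i j

lemma ae_injective_unifPi (n : ℕ) : ∀ᵐ ω ∂unifPi n, Function.Injective ω := by
  rw [unifPi_eq_restrict]
  exact ae_restrict_of_ae (ae_injective_volume n)

lemma measurePreserving_comp_perm_unifPi {n : ℕ} (σ : Equiv.Perm (Fin n)) :
    MeasurePreserving (fun ω : Fin n → ℝ => ω ∘ σ) (unifPi n) (unifPi n) := by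
  unfold unifPi
  convert measurePreserving_piCongrLeft (fun _ : Fin n => unif) σ.symm using 1
  ext ω i
  simp [MeasurableEquiv.coe_piCongrLeft, Equiv.piCongrLeft_apply]

lemma Continuous.integrable_unifPi {n : ℕ} {F : (Fin n → ℝ) → ℝ} (hF : Continuous F) :
    Integrable F (unifPi n) := by
  rw [unifPi_eq_restrict]
  exact hF.continuousOn.integrableOn_compact (isCompact_univ_pi fun _ => isCompact_Icc)

section Exchangeable

variable {n : ℕ} {μ : Measure (Fin n → ℝ)}

lemma measurableSet_setOf_monotone : MeasurableSet {ω : Fin n → ℝ | Monotone ω} :=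
  isClosed_monotone.measurableSet

lemma comp_sortedTuple_ae_eq (hinj : ∀ᵐ ω ∂μ, Function.Injective ω) (F : (Fin n → ℝ) → ℝ) :
    (fun ω => F (sortedTuple ω)) =ᵐ[μ]
      fun ω => ∑ σ : Equiv.Perm (Fin n), {ω' | Monotone ω'}.indicator F (ω ∘ σ) := by
  filter_upwards [hinj] with ω hω
  rw [Finset.sum_eq_single (Tuple.sort ω)]
  · exact (Set.indicator_of_mem (Tuple.monotone_sort ω) F).symm
  · intro σ _ hσ
    refine Set.indicator_of_notMem (fun hmono => hσ ?_) F
    exact Equiv.ext fun i => hω (congrFun (Tuple.comp_sort_eq_comp_iff_monotone.2 hmono) i)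
  · exact fun h => absurd (Finset.mem_univ _) h

lemma integrable_comp_sortedTuple
    (hperm : ∀ σ : Equiv.Perm (Fin n), MeasurePreserving (fun ω => ω ∘ σ) μ μ)
    (hinj : ∀ᵐ ω ∂μ, Function.Injective ω) {F : (Fin n → ℝ) → ℝ} (hF : Integrable F μ) :
    Integrable (fun ω => F (sortedTuple ω)) μ :=
  (integrable_finsetSum _ fun σ _ => (hperm σ).integrable_comp_of_integrable
    (hF.indicator measurableSet_setOf_monotone)).congr (comp_sortedTuple_ae_eq hinj F).symm

lemma integral_comp_sortedTuple
    (hperm : ∀ σ : Equiv.Perm (Fin n), MeasurePreserving (fun ω => ω ∘ σ) μ μ)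
    (hinj : ∀ᵐ ω ∂μ, Function.Injective ω) {F : (Fin n → ℝ) → ℝ} (hF : Integrable F μ) :
    ∫ ω, F (sortedTuple ω) ∂μ = n.factorial * ∫ ω in {ω | Monotone ω}, F ω ∂μ := by
  have hG : Integrable ({ω | Monotone ω}.indicator F) μ :=
    hF.indicator measurableSet_setOf_monotone
  have hσ (σ : Equiv.Perm (Fin n)) :
      ∫ ω, {ω' | Monotone ω'}.indicator F (ω ∘ σ) ∂μ = ∫ ω in {ω | Monotone ω}, F ω ∂μ := by
    have h := integral_map (hperm σ).measurable.aemeasurable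
      ((hperm σ).map_eq.symm ▸ hG.aestronglyMeasurable)
    rwa [(hperm σ).map_eq, integral_indicator measurableSet_setOf_monotone, eq_comm] at h
  rw [integral_congr_ae (comp_sortedTuple_ae_eq hinj F),
    integral_finsetSum
      (f := fun (σ : Equiv.Perm (Fin n)) ω => {ω' | Monotone ω'}.indicator F (ω ∘ σ)) _
      fun σ _ => (hperm σ).integrable_comp_of_integrable hG]
  simp only [hσ, Finset.sum_const, Finset.card_univ, Fintype.card_perm, Fintype.card_fin,
    nsmul_eq_mul]

end Exchangeable

lemma Fin.monotone_snoc_iff {α : Type*} [Preorder α] {n : ℕ} {y : Fin n → α} {x : α} :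
    Monotone (Fin.snoc y x : Fin (n + 1) → α) ↔ Monotone y ∧ ∀ i, y i ≤ x := by
  refine ⟨fun h => ⟨fun a b hab => ?_, fun i => ?_⟩, fun ⟨hy, hx⟩ a b hab => ?_⟩
  · simpa using h (Fin.castSucc_le_castSucc_iff.2 hab)
  · simpa using h (Fin.le_last i.castSucc)
  · induction b using Fin.lastCases with
    | last =>
      induction a using Fin.lastCases with
      | last => exact le_rfl
      | cast a => simpa using hx a
    | cast b =>
      induction a using Fin.lastCases with
      | last => exact absurd hab (not_le.2 (Fin.castSucc_lt_last b))
      | cast a => simpa using hy (Fin.castSucc_le_castSucc_iff.1 hab)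

lemma integral_unifPi_succ {n : ℕ} {g : (Fin (n + 1) → ℝ) → ℝ}
    (hg : Integrable g (unifPi (n + 1))) :
    ∫ ω, g ω ∂unifPi (n + 1) = ∫ x, ∫ y, g (Fin.snoc y x) ∂unifPi n ∂unif := by
  let e := MeasurableEquiv.piFinSuccAbove (fun _ : Fin (n + 1) => ℝ) (Fin.last n)
  have he (p : ℝ × (Fin n → ℝ)) : e.symm p = Fin.snoc p.2 p.1 := by
    simp [e, MeasurableEquiv.piFinSuccAbove_symm_apply]
    rfl
  have hpres : MeasurePreserving e.symm (unif.prod (unifPi n)) (unifPi (n + 1)) :=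
    (measurePreserving_piFinSuccAbove (fun _ => unif) (Fin.last n)).symm e
  rw [← hpres.integral_comp',
    integral_prod (fun p => g (e.symm p)) (hpres.integrable_comp_of_integrable hg)]
  simp only [he]

lemma setIntegral_Iic_pow_unif (k : ℕ) {c : ℝ} (hc0 : 0 ≤ c) (hc1 : c ≤ 1) :
    ∫ x in Set.Iic c, x ^ k ∂unif = c ^ (k + 1) / (k + 1) := by
  have hIcc : Set.Iic c ∩ Set.Icc 0 1 = Set.Icc 0 c := by
    ext x
    simp only [Set.mem_inter_iff, Set.mem_Iic, Set.mem_Icc]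
    constructor
    · rintro ⟨hxc, hx0, -⟩; exact ⟨hx0, hxc⟩
    · rintro ⟨hx0, hxc⟩; exact ⟨hxc, hx0, hxc.trans hc1⟩
  rw [unif, Measure.restrict_restrict measurableSet_Iic, hIcc, integral_Icc_eq_integral_Ioc,
    ← intervalIntegral.integral_of_le hc0, integral_pow]
  simp

lemma isClosed_setOf_monotone_le (n : ℕ) (c : ℝ) :
    IsClosed {ω : Fin n → ℝ | Monotone ω ∧ ∀ i, ω i ≤ c} :=
  isClosed_monotone.inter (isClosed_Iic (a := fun _ => c))

lemma indicator_monotone_le_prod_pow_snoc {n : ℕ} (f : Fin (n + 1) → ℕ) (c x : ℝ)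
    (y : Fin n → ℝ) :
    {ω : Fin (n + 1) → ℝ | Monotone ω ∧ ∀ i, ω i ≤ c}.indicator (fun ω => ∏ i, ω i ^ f i)
        (Fin.snoc y x) =
      (Set.Iic c).indicator (fun x => x ^ f (Fin.last n)) x *
        {y : Fin n → ℝ | Monotone y ∧ ∀ i, y i ≤ x}.indicator
          (fun y => ∏ i, y i ^ f i.castSucc) y := by
  by_cases hx : x ≤ c
  · by_cases hy : y ∈ {y : Fin n → ℝ | Monotone y ∧ ∀ i, y i ≤ x}
    · have hmem : (Fin.snoc y x : Fin (n + 1) → ℝ) ∈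
          {ω : Fin (n + 1) → ℝ | Monotone ω ∧ ∀ i, ω i ≤ c} := by
        refine ⟨Fin.monotone_snoc_iff.2 hy, Fin.lastCases ?_ fun i => ?_⟩ <;> simp
        · exact hx
        · exact (hy.2 i).trans hx
      rw [Set.indicator_of_mem hmem, Set.indicator_of_mem (Set.mem_Iic.2 hx),
        Set.indicator_of_mem hy, Fin.prod_univ_castSucc]
      simp only [Fin.snoc_castSucc, Fin.snoc_last]
      ring
    · rw [Set.indicator_of_notMem hy, mul_zero]
      exact Set.indicator_of_notMem (fun h => hy (Fin.monotone_snoc_iff.1 h.1)) _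
  · rw [Set.indicator_of_notMem (fun h => hx (Set.mem_Iic.1 h)), zero_mul]
    exact Set.indicator_of_notMem (fun h => hx (by simpa using h.2 (Fin.last n))) _

theorem setIntegral_monotone_le_prod_pow_unifPi (n : ℕ) (f : Fin n → ℕ) {c : ℝ}
    (hc0 : 0 ≤ c) (hc1 : c ≤ 1) :
    ∫ ω in {ω : Fin n → ℝ | Monotone ω ∧ ∀ i, ω i ≤ c}, ∏ i, ω i ^ f i ∂unifPi n =
      c ^ (∑ i, f i + n) / ∏ i, ((∑ j ∈ Finset.Iic i, f j + i + 1 : ℕ) : ℝ) := by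
  induction n generalizing c with
  | zero =>
    have huniv : {ω : Fin 0 → ℝ | Monotone ω ∧ ∀ i, ω i ≤ c} = Set.univ :=
      Set.eq_univ_of_forall fun ω => ⟨Subsingleton.monotone ω, finZeroElim⟩
    rw [huniv]
    simp
  | succ n ih =>
    set S := {ω : Fin (n + 1) → ℝ | Monotone ω ∧ ∀ i, ω i ≤ c}
    set P := ∏ i : Fin n, ((∑ j ∈ Finset.Iic i, f j.castSucc + i + 1 : ℕ) : ℝ)
    set k := ∑ i, f i + n
    have hS := (isClosed_setOf_monotone_le (n + 1) c).measurableSet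
    have hint : Integrable (S.indicator fun ω => ∏ i, ω i ^ f i) (unifPi (n + 1)) :=
      (continuous_finsetProd _ fun i _ => (continuous_apply i).pow _).integrable_unifPi.indicator hS
    have hfiber : ∀ᵐ x ∂unif,
        ∫ y, S.indicator (fun ω => ∏ i, ω i ^ f i) (Fin.snoc y x) ∂unifPi n =
          (Set.Iic c).indicator (fun x => x ^ k) x / P := by
      filter_upwards [ae_restrict_mem measurableSet_Icc] with x hx
      simp only [S, indicator_monotone_le_prod_pow_snoc, integral_const_mul,
        integral_indicator (isClosed_setOf_monotone_le n x).measurableSet]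
      rw [ih (fun i => f i.castSucc) hx.1 hx.2]
      by_cases hxc : x ≤ c
      · simp only [Set.indicator_of_mem (Set.mem_Iic.2 hxc), k, Fin.sum_univ_castSucc]
        ring
      · simp [Set.indicator_of_notMem (fun h => hxc (Set.mem_Iic.1 h))]
    calc ∫ ω in S, ∏ i, ω i ^ f i ∂unifPi (n + 1)
        = ∫ x, ∫ y, S.indicator (fun ω => ∏ i, ω i ^ f i) (Fin.snoc y x) ∂unifPi n ∂unif := by
          rw [← integral_indicator hS, integral_unifPi_succ hint]
      _ = ∫ x, (Set.Iic c).indicator (fun x => x ^ k) x / P ∂unif := integral_congr_ae hfiber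
      _ = c ^ (∑ i, f i + (n + 1)) / ∏ i, ((∑ j ∈ Finset.Iic i, f j + i + 1 : ℕ) : ℝ) := by
          rw [integral_div, integral_indicator measurableSet_Iic,
            setIntegral_Iic_pow_unif k hc0 hc1, Fin.prod_univ_castSucc]
          simp only [Fin.sum_Iic_castSucc, Fin.val_castSucc, ← Fin.top_eq_last, Finset.Iic_top,
            Fin.val_top, P, k]
          rw [Nat.add_sub_cancel, div_div, mul_comm, ← add_assoc]
          push_cast
          ring

lemma Nat.factorial_mul_prod_Ico_add_one (c : ℕ) {m n : ℕ} (h : m ≤ n) :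
    (m + c).factorial * ∏ i ∈ Finset.Ico m n, (i + c + 1) = (n + c).factorial := by
  induction n, h using Nat.le_induction with
  | base => simp
  | succ n hmn ih =>
    rw [Finset.prod_Ico_succ_top hmn, ← mul_assoc, ih, add_right_comm n 1 c,
      Nat.factorial_succ]
    ring

lemma prod_range_add_one_add_ite_le (n : ℕ) {a b : ℕ} (hab : a ≤ b) (hbn : b < n) :
    (a + 1) * (b + 2) *
        ∏ i ∈ Finset.range n, (i + 1 + (if a ≤ i then 1 else 0) + (if b ≤ i then 1 else 0)) =
      (n + 2).factorial := by
  set F := fun i => i + 1 + (if a ≤ i then 1 else 0) + (if b ≤ i then 1 else 0)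
  have e₁ : ∀ i ∈ Finset.range a, F i = i + 1 := fun i hi => by
    simp [F, not_le.2 (Finset.mem_range.1 hi), not_le.2 ((Finset.mem_range.1 hi).trans_le hab)]
  have e₂ : ∀ i ∈ Finset.Ico a b, F i = i + 1 + 1 := fun i hi => by
    simp [F, (Finset.mem_Ico.1 hi).1, not_le.2 (Finset.mem_Ico.1 hi).2]
  have e₃ : ∀ i ∈ Finset.Ico b n, F i = i + 2 + 1 := fun i hi => by
    simp [F, (Finset.mem_Ico.1 hi).1, hab.trans (Finset.mem_Ico.1 hi).1]
  have h₂ := Nat.factorial_mul_prod_Ico_add_one 1 hab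
  have h₃ := Nat.factorial_mul_prod_Ico_add_one 2 hbn.le
  rw [← Finset.prod_range_mul_prod_Ico _ hbn.le, ← Finset.prod_range_mul_prod_Ico _ hab,
    Finset.prod_congr rfl e₁, Finset.prod_congr rfl e₂, Finset.prod_congr rfl e₃, ← h₃,
    show (b + 2).factorial = (b + 2) * (b + 1).factorial from Nat.factorial_succ (b + 1), ← h₂,
    Nat.factorial_succ a, ← Finset.prod_range_add_one_eq_factorial]
  ring

theorem setIntegral_monotone_mul_unifPi {n : ℕ} {a b : Fin n} (hab : a ≤ b) :
    ∫ ω in {ω : Fin n → ℝ | Monotone ω}, ω a * ω b ∂unifPi n =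
      ((a : ℝ) + 1) * ((b : ℝ) + 2) / (n + 2).factorial := by
  have hset : {ω : Fin n → ℝ | Monotone ω ∧ ∀ i, ω i ≤ 1} =ᵐ[unifPi n] {ω | Monotone ω} := by
    refine Filter.eventuallyEq_set.2 ?_
    filter_upwards [ae_mem_Icc_unifPi n] with ω hω
    exact ⟨And.left, fun h => ⟨h, fun i => (hω i).2⟩⟩
  let f : Fin n → ℕ := fun i => (if i = a then 1 else 0) + (if i = b then 1 else 0)
  have hprod (ω : Fin n → ℝ) : ∏ i, ω i ^ f i = ω a * ω b := by
    simp only [f, pow_add, Finset.prod_mul_distrib, pow_ite, pow_one, pow_zero,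
      Finset.prod_ite_eq', Finset.mem_univ, if_true]
  have hdenom (i : Fin n) : ∑ j ∈ Finset.Iic i, f j + i + 1 =
      i + 1 + (if (a : ℕ) ≤ i then 1 else 0) + (if (b : ℕ) ≤ i then 1 else 0) := by
    simp only [f, Finset.sum_add_distrib, Finset.sum_ite_eq', Finset.mem_Iic, Fin.le_iff_val_le_val]
    ring
  have hcount := prod_range_add_one_add_ite_le n hab b.isLt
  rw [← setIntegral_congr_set hset]
  simp only [← hprod]
  rw [setIntegral_monotone_le_prod_pow_unifPi n f zero_le_one le_rfl, one_pow, ← Nat.cast_prod]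
  simp only [hdenom]
  rw [Fin.prod_univ_eq_prod_range
    (fun i => i + 1 + (if (a : ℕ) ≤ i then 1 else 0) + (if (b : ℕ) ≤ i then 1 else 0)), ← hcount]
  push_cast
  field_simp

lemma integrable_sortedTuple_mul_unifPi (n : ℕ) (a b : Fin n) :
    Integrable (fun ω => sortedTuple ω a * sortedTuple ω b) (unifPi n) :=
  integrable_comp_sortedTuple measurePreserving_comp_perm_unifPi (ae_injective_unifPi n)
    (F := fun ω => ω a * ω b) ((continuous_apply a).mul (continuous_apply b)).integrable_unifPi

theorem integral_sortedTuple_mul_unifPi {n : ℕ} {a b : Fin n} (hab : a ≤ b) :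
    ∫ ω, sortedTuple ω a * sortedTuple ω b ∂unifPi n =
      ((a : ℝ) + 1) * ((b : ℝ) + 2) / ((n + 1) * (n + 2)) := by
  rw [integral_comp_sortedTuple measurePreserving_comp_perm_unifPi (ae_injective_unifPi n)
      (F := fun ω => ω a * ω b) ((continuous_apply a).mul (continuous_apply b)).integrable_unifPi,
    setIntegral_monotone_mul_unifPi hab, Nat.factorial_succ, Nat.factorial_succ]
  push_cast
  field_simp
  ring

theorem integral_spacing_mul_spacing_unifPi {n : ℕ} {L K A B : Fin n} (hLK : L ≤ K)
    (hKA : K ≤ A) (hAB : A ≤ B) :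
    ∫ ω, (sortedTuple ω A - sortedTuple ω L) * (sortedTuple ω B - sortedTuple ω K) ∂unifPi n =
      (((A : ℝ) + 1) * ((B : ℝ) + 2) - ((K : ℝ) + 1) * ((A : ℝ) + 2)
        - ((L : ℝ) + 1) * ((B : ℝ) + 2) + ((L : ℝ) + 1) * ((K : ℝ) + 2)) / ((n + 1) * (n + 2)) := by
  have hX := integrable_sortedTuple_mul_unifPi n
  have hexpand : ∀ ω : Fin n → ℝ,
      (sortedTuple ω A - sortedTuple ω L) * (sortedTuple ω B - sortedTuple ω K) =
        sortedTuple ω A * sortedTuple ω B - sortedTuple ω K * sortedTuple ω A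
          - sortedTuple ω L * sortedTuple ω B + sortedTuple ω L * sortedTuple ω K :=
    fun ω => by ring
  simp only [hexpand]
  rw [integral_add (((hX A B).sub' (hX K A)).sub' (hX L B)) (hX L K),
    integral_sub ((hX A B).sub' (hX K A)) (hX L B), integral_sub (hX A B) (hX K A),
    integral_sortedTuple_mul_unifPi hAB, integral_sortedTuple_mul_unifPi hKA,
    integral_sortedTuple_mul_unifPi (hLK.trans (hKA.trans hAB)),
    integral_sortedTuple_mul_unifPi hLK]
  ring

/-- For a uniform sample of `2N` points, with `φ_l = X₍l+N₎ − X₍l₎`,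
`E[φ_l φ_k] = (N(N+1) − (k−l)) / ((2N+2)(2N+1))` for `1 ≤ l ≤ k ≤ N`. -/
theorem crossing_length_pair_correlation {N : ℕ} (l k : Fin N) (hlk : l ≤ k) :
    ∫ ω : Fin (2 * N) → ℝ,
        (sortedTuple ω ⟨l.1 + N, by omega⟩ - sortedTuple ω ⟨l.1, by omega⟩) *
          (sortedTuple ω ⟨k.1 + N, by omega⟩ - sortedTuple ω ⟨k.1, by omega⟩)
      ∂(unifPi (2 * N)) =
      ((N : ℝ) * (N + 1) - ((k.1 : ℝ) - (l.1 : ℝ))) /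
        ((2 * N + 2) * (2 * N + 1)) := by
  rw [integral_spacing_mul_spacing_unifPi (Fin.mk_le_mk.2 hlk)
    (Fin.mk_le_mk.2 (by omega)) (Fin.mk_le_mk.2 (by simpa using hlk))]
  push_cast
  ring
end
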